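/- arXiv:2111.03771 — 2 statements merged into one kernel-verified Lean document; each statement's English description precedes it below -/
import Mathlib

section
/- Let d ≥ 2 and let T be a d-regular rooted plane tree of height at least n with a labeling λ : V(T) → [1,n]. Then there exists g ∈ R (depending on λ) such that Σ_{η ∈ K(T,λ)} w(T,η) = z(fern_{d,n}, λ_fern) · g, where λ_fern is the root-leaf labeling of fern_{d,n} determined by λ: the root and leaves of fern_{d,n} receive the labels that λ assigns to the root of T and to the children of the vertices of LP_n(T), respectively. In particular z(fern_{d,n}, λ_fern) divides Σ_{η ∈ K(T,λ)} w(T,η) in R. -/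
/-!
Every labeling in `K(T,λ)` is obtained from `λ` by relabeling the interior vertices
`v_1, …, v_{n-1}` of the path, and different relabelings give different labelings, so the sum
runs over `(n-1)`-tuples of labels. The weight of such a labeling factors as the edges from
`v_0` to its children, times the weight of the subtree at `v_1`, times the weights of the
subtrees hanging off `v_0` beside `v_1`. Those hanging subtrees do not depend on the tuple, and
summing over the label of `v_1` reproduces the recursion defining `fernZ`. Induction along the
path thus gives the sum as `z(fern_{d,n}, λ_fern)` times the product of the weights of all
subtrees hanging off the path.
-/

open MvPolynomial

/-- A rooted plane tree with vertices labeled by `[1,n]`: a root label together with a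
(linearly ordered) finite list of labeled subtrees. -/
inductive LTree (n : ℕ) : Type where
  | node : Fin n → List (LTree n) → LTree n

namespace LTree

/-- The label of the root. -/
def label {n : ℕ} : LTree n → Fin n
  | node i _ => i

/-- The (ordered) list of subtrees rooted at the children of the root. -/
def children {n : ℕ} : LTree n → List (LTree n)
  | node _ cs => cs

/-- The weight `w(T,λ) = ∏_{e} w(e,λ)`, the product over all edges `e` of `T`, from a
parent labeled `i` to a child labeled `j`, of the indeterminate `a_{i,j}`. -/
noncomputable def weight {n : ℕ} : LTree n → MvPolynomial (Fin n × Fin n) ℚ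
  | node i cs => (cs.attach.map fun c => X (i, c.1.label) * weight c.1).prod
decreasing_by simp only [LTree.node.sizeOf_spec]; have := List.sizeOf_lt_of_mem c.2; omega

/-- The multidegree given by the labels of the leaves of `T` (a tree with no children is
a single leaf). -/
noncomputable def leafDeg {n : ℕ} : LTree n → (Fin n →₀ ℕ)
  | node i [] => Finsupp.single i 1
  | node _ (c :: cs) => ((c :: cs).attach.map fun x => leafDeg x.1).sum
decreasing_by simp only [LTree.node.sizeOf_spec]; have := List.sizeOf_lt_of_mem x.2; omega

/-- A tree is `d`-regular if every vertex has exactly `d` children or none. -/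
def IsReg {n : ℕ} (d : ℕ) : LTree n → Prop
  | node _ cs => (cs.length = d ∨ cs.length = 0) ∧ ∀ c ∈ cs.attach, IsReg d c.1
decreasing_by simp only [LTree.node.sizeOf_spec]; have := List.sizeOf_lt_of_mem c.2; omega

/-- The subtree of `T` at the position given by a list of child indices (root = `[]`),
or `none` if no such vertex exists. -/
def subtreeAt? {n : ℕ} : LTree n → List ℕ → Option (LTree n)
  | t, [] => some t
  | t, k :: q => match t.children[k]? with
    | some c => subtreeAt? c q
    | none => none

/-- The label of the vertex of `T` at a given position, if it exists. -/
def labelAt? {n : ℕ} (t : LTree n) (q : List ℕ) : Option (Fin n) :=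
  (t.subtreeAt? q).map label

end LTree

/-- The weight-sum `z(fern_{d,n}, μ)` of the fern tree, defined recursively along the
leftmost path of the fern.  `fernZ r ts s` is the sum, over all labelings of the interior
vertices `u_1, …, u_{n-1}` of the leftmost path, of the product of the edge weights, where
the root `u_0` is labeled `r`, the `k`-th entry of `ts` is the list of labels of the leaf
children of `u_k`, and `s` is the list of labels of the `d` leaf children of the last
interior vertex `u_{n-1}`. -/
noncomputable def fernZ {n : ℕ} :
    Fin n → List (List (Fin n)) → List (Fin n) → MvPolynomial (Fin n × Fin n) ℚ
  | r, [], s => (s.map fun j => X (r, j)).prod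
  | r, t :: ts, s =>
      ∑ c : Fin n, X (r, c) * (t.map fun j => X (r, j)).prod * fernZ c ts s

theorem List.prod_map_modify {α M : Type*} [CommMonoid M] (f : α → α) (g : α → M)
    {l : List α} {i : ℕ} (h : i < l.length) :
    ((l.modify i f).map g).prod = g (f l[i]) * ((l.eraseIdx i).map g).prod := by
  rw [List.modify_eq_take_cons_drop h, List.eraseIdx_eq_take_drop_succ]
  simp only [List.map_append, List.map_cons, List.prod_append, List.prod_cons]
  exact mul_left_comm _ _ _

namespace LTree

variable {n : ℕ}

@[simp] lemma label_node (r : Fin n) (cs : List (LTree n)) : (node r cs).label = r := rfl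

@[simp] lemma children_node (r : Fin n) (cs : List (LTree n)) : (node r cs).children = cs := rfl

lemma weight_node (r : Fin n) (cs : List (LTree n)) :
    (node r cs).weight = (cs.map fun c => X (r, c.label) * c.weight).prod := by
  rw [weight, List.map_attach_eq_pmap]
  simp [List.pmap_eq_map]

lemma subtreeAt?_cons (t : LTree n) (k : ℕ) (q : List ℕ) :
    t.subtreeAt? (k :: q) = t.children[k]?.bind (subtreeAt? · q) := by
  cases h : t.children[k]? <;> simp [subtreeAt?, h]

@[simp] lemma labelAt?_nil (t : LTree n) : t.labelAt? [] = some t.label := rfl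

lemma labelAt?_cons (t : LTree n) (k : ℕ) (q : List ℕ) :
    t.labelAt? (k :: q) = t.children[k]?.bind (labelAt? · q) := by
  simp only [labelAt?, subtreeAt?_cons, Option.map_bind]
  rfl

lemma isSome_labelAt? (t : LTree n) (q : List ℕ) :
    (t.labelAt? q).isSome = (t.subtreeAt? q).isSome :=
  Option.isSome_map

theorem eq_of_labelAt?_eq : ∀ {t₁ t₂ : LTree n}, (∀ q, t₁.labelAt? q = t₂.labelAt? q) → t₁ = t₂
  | node r₁ cs₁, node r₂ cs₂, h => by
    have hr : r₁ = r₂ := by simpa using h []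
    have hcs : cs₁ = cs₂ := List.ext_getElem? fun i => by
      have hi := fun q => h (i :: q)
      simp only [labelAt?_cons, children_node] at hi
      match h₁ : cs₁[i]?, h₂ : cs₂[i]? with
      | none, none => rfl
      | some s₁, some s₂ =>
        have := List.sizeOf_lt_of_mem (List.mem_of_getElem? h₁)
        simpa [h₁, h₂] using eq_of_labelAt?_eq fun q => by simpa [h₁, h₂] using hi q
      | some _, none | none, some _ => simpa [h₁, h₂] using hi []
    rw [hr, hcs]
termination_by t₁ => sizeOf t₁
decreasing_by simp only [LTree.node.sizeOf_spec]; omega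

lemma subtreeAt?_take_of_chain : ∀ {p : List ℕ} {v : ℕ → LTree n},
    (∀ k < p.length, (v k).children[p.getD k 0]? = some (v (k + 1))) →
    ∀ k ≤ p.length, (v 0).subtreeAt? (p.take k) = some (v k)
  | _, _, _, 0, _ => rfl
  | j :: p, v, hchain, k + 1, hk => by
    have h₀ : (v 0).children[j]? = some (v 1) := hchain 0 (by simp)
    have ih := subtreeAt?_take_of_chain (p := p) (v := fun i => v (i + 1))
      (fun i hi => hchain (i + 1) (by simpa using hi)) k (by simpa using hk)
    rw [List.take_succ_cons, subtreeAt?_cons, h₀, Option.bind_some, ih]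

/-- `L` lists the new labels of the vertices `p.take 0, p.take 1, …` of the path, starting
with the root. -/
def relabel : LTree n → List ℕ → List (Fin n) → LTree n
  | t, _, [] => t
  | t, [], c :: _ => node c t.children
  | t, k :: ks, c :: L => node c (t.children.modify k (relabel · ks L))

@[simp] lemma relabel_nil (t : LTree n) (p : List ℕ) : t.relabel p [] = t := by
  cases p <;> rfl

lemma relabel_cons_cons (t : LTree n) (k : ℕ) (ks : List ℕ) (c : Fin n) (L : List (Fin n)) :
    t.relabel (k :: ks) (c :: L) = node c (t.children.modify k (relabel · ks L)) := by
  rw [relabel]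

@[simp] lemma label_relabel_cons (t : LTree n) (p : List ℕ) (c : Fin n) (L : List (Fin n)) :
    (t.relabel p (c :: L)).label = c := by
  cases p <;> rfl

lemma relabel_singleton (t : LTree n) (p : List ℕ) (c : Fin n) :
    t.relabel p [c] = node c t.children := by
  cases p with
  | nil => rfl
  | cons k ks =>
    rw [relabel_cons_cons]
    simp only [relabel_nil]
    exact congrArg _ (List.modify_id k _)

lemma isSome_subtreeAt?_relabel : ∀ (t : LTree n) (p : List ℕ) (L : List (Fin n)) (q : List ℕ),
    ((t.relabel p L).subtreeAt? q).isSome = (t.subtreeAt? q).isSome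
  | t, _, [], q => by simp
  | _, _, _ :: _, [] => rfl
  | t, [], c :: L, j :: q => by simp [relabel, subtreeAt?_cons]
  | t, k :: ks, c :: L, j :: q => by
    rw [relabel_cons_cons, subtreeAt?_cons, subtreeAt?_cons, children_node, List.getElem?_modify]
    cases t.children[j]? with
    | none => rfl
    | some s =>
      split_ifs
      · exact isSome_subtreeAt?_relabel s ks L q
      · rfl

lemma labelAt?_relabel_take : ∀ (t : LTree n) (p : List ℕ) (L : List (Fin n)) (k : ℕ)
    (_ : k < L.length) (_ : k ≤ p.length),
    (t.relabel p L).labelAt? (p.take k) = (t.subtreeAt? (p.take k)).map fun _ => L[k]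
  | t, p, c :: L, 0, _, _ => by simp [subtreeAt?]
  | t, j :: p, c :: L, k + 1, hkL, hkp => by
    have ih := fun s => labelAt?_relabel_take s p L k (by simpa using hkL) (by simpa using hkp)
    rw [List.take_succ_cons, relabel_cons_cons, labelAt?_cons, subtreeAt?_cons, children_node,
      List.getElem?_modify_eq]
    cases t.children[j]? with
    | none => rfl
    | some s => simpa using ih s

lemma labelAt?_relabel_of_ne : ∀ (t : LTree n) (p : List ℕ) (L : List (Fin n)) (q : List ℕ),
    (∀ k < L.length, q ≠ p.take k) → (t.relabel p L).labelAt? q = t.labelAt? q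
  | t, _, [], q, _ => by simp
  | _, _, _ :: _, [], hq => absurd rfl (hq 0 (by simp))
  | t, [], c :: L, j :: q, _ => by simp [relabel, labelAt?_cons]
  | t, k :: ks, c :: L, j :: q, hq => by
    rw [relabel_cons_cons, labelAt?_cons, labelAt?_cons, children_node, List.getElem?_modify]
    cases t.children[j]? with
    | none => rfl
    | some s =>
      split_ifs with hkj
      · subst hkj
        refine labelAt?_relabel_of_ne s ks L q fun i hi hqi => hq (i + 1) (by simpa using hi) ?_
        rw [hqi, List.take_succ_cons]
      · rfl

theorem exists_sum_weight_relabel_eq_fernZ_mul : ∀ (m : ℕ) (p : List ℕ) (v : ℕ → LTree n),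
    m < p.length → (∀ k < m, (v k).children[p.getD k 0]? = some (v (k + 1))) →
    ∃ g, ∀ r : Fin n, ∑ L : Fin m → Fin n, ((v 0).relabel p (r :: List.ofFn L)).weight =
      fernZ r (List.ofFn fun k : Fin m => ((v k).children.map label).eraseIdx (p.getD k 0))
        ((v m).children.map label) * g
  | 0, p, v, _, _ => ⟨((v 0).children.map weight).prod, fun r => by
      rw [Fintype.sum_unique, List.ofFn_zero, relabel_singleton, weight_node, List.prod_map_mul,
        List.ofFn_zero, fernZ, List.map_map]
      rfl⟩
  | m + 1, k₀ :: ks, v, hp, hchain => by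
    obtain ⟨g, hg⟩ := exists_sum_weight_relabel_eq_fernZ_mul m ks (fun i => v (i + 1))
      (by simpa using hp) fun i hi => by simpa using hchain (i + 1) (by omega)
    have h₀ : (v 0).children[k₀]? = some (v 1) := hchain 0 m.succ_pos
    obtain ⟨hk₀, hv₁⟩ := List.getElem?_eq_some_iff.mp h₀
    set sib := (v 0).children.eraseIdx k₀
    -- The subtrees `sib` beside `v 1` do not depend on `r`, so neither does the new `g`.
    refine ⟨(sib.map weight).prod * g, fun r => ?_⟩
    have hterm : ∀ L : Fin (m + 1) → Fin n,
        ((v 0).relabel (k₀ :: ks) (r :: List.ofFn L)).weight =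
          X (r, L 0) * ((v 1).relabel ks (L 0 :: List.ofFn fun i => L i.succ)).weight *
            (sib.map fun c => X (r, c.label) * c.weight).prod := by
      intro L
      rw [List.ofFn_succ, relabel_cons_cons, weight_node, List.prod_map_modify _ _ hk₀, hv₁,
        label_relabel_cons]
    calc ∑ L : Fin (m + 1) → Fin n, ((v 0).relabel (k₀ :: ks) (r :: List.ofFn L)).weight
        = ∑ c, X (r, c) * (∑ L : Fin m → Fin n, ((v 1).relabel ks (c :: List.ofFn L)).weight) *
            (sib.map fun c => X (r, c.label) * c.weight).prod := by
          rw [Fintype.sum_congr _ _ hterm, ← (Fin.consEquiv fun _ => Fin n).sum_comp,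
            Fintype.sum_prod_type]
          simp only [Fin.consEquiv_apply, Fin.cons_zero, Fin.cons_succ, Finset.mul_sum,
            Finset.sum_mul]
      _ = _ := by
          simp only [hg, List.ofFn_succ, fernZ, Finset.sum_mul]
          refine Fintype.sum_congr _ _ fun c => ?_
          simp only [Fin.val_zero, Fin.val_succ, List.getD_cons_zero, List.getD_cons_succ,
            List.eraseIdx_map, List.map_map, Function.comp_def, List.prod_map_mul, sib]
          ring

lemma labelAt?_relabel_take_of_isSome {t : LTree n} {p : List ℕ} {L : List (Fin n)} {k : ℕ}
    (hkL : k < L.length) (hkp : k ≤ p.length) (hk : (t.subtreeAt? (p.take k)).isSome) :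
    (t.relabel p L).labelAt? (p.take k) = some L[k] := by
  obtain ⟨s, hs⟩ := Option.isSome_iff_exists.mp hk
  rw [labelAt?_relabel_take t p L k hkL hkp, hs, Option.map_some]

lemma relabel_injective {m : ℕ} {T : LTree n} {p : List ℕ} (hm : m ≤ p.length)
    (hpath : ∀ k ≤ m, (T.subtreeAt? (p.take k)).isSome) :
    Function.Injective fun L : Fin m → Fin n => T.relabel p (T.label :: List.ofFn L) := by
  intro L₁ L₂ (h : T.relabel p _ = T.relabel p _)
  funext k
  have hk := labelAt?_relabel_take_of_isSome (L := T.label :: List.ofFn L₁) (k := k + 1)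
    (by simp) (by omega) (hpath _ k.2)
  rw [h, labelAt?_relabel_take_of_isSome (by simp) (by omega) (hpath _ k.2)] at hk
  simpa using hk.symm

theorem setOf_eq_range_relabel {m : ℕ} {T : LTree n} {p : List ℕ} (hm : m ≤ p.length)
    (hpath : ∀ k ≤ m, (T.subtreeAt? (p.take k)).isSome) :
    {T' : LTree n | (∀ q, (T.subtreeAt? q).isSome ↔ (T'.subtreeAt? q).isSome) ∧
      ∀ q, (∀ k, 1 ≤ k → k < m + 1 → q ≠ p.take k) → T.labelAt? q = T'.labelAt? q} =
    Set.range fun L : Fin m → Fin n => T.relabel p (T.label :: List.ofFn L) := by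
  ext T'
  constructor
  · rintro ⟨hshape, hoff⟩
    have hsome : ∀ k : Fin m, (T'.labelAt? (p.take (k + 1))).isSome := fun k => by
      rw [isSome_labelAt?, ← hshape]
      exact hpath _ k.2
    refine ⟨fun k => (T'.labelAt? (p.take (k + 1))).get (hsome k),
      eq_of_labelAt?_eq fun q => ?_⟩
    by_cases hq : ∃ k < m + 1, q = p.take k
    · obtain ⟨k, hk, rfl⟩ := hq
      rw [labelAt?_relabel_take_of_isSome (by simpa using hk) (by omega) (hpath k (by omega))]
      cases k with
      | zero =>
        refine hoff [] fun k hk₁ hk₂ h => ?_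
        have := congrArg List.length h
        simp only [List.length_nil, List.length_take] at this
        omega
      | succ k => simp
    · simp only [not_exists, not_and] at hq
      rw [labelAt?_relabel_of_ne _ _ _ _ fun k hk => hq k (by simpa using hk)]
      exact hoff q fun k _ hk => hq k hk
  · rintro ⟨L, rfl⟩
    refine ⟨fun q => by rw [isSome_subtreeAt?_relabel], fun q hq => ?_⟩
    cases q with
    | nil => simp
    | cons j q =>
      refine (labelAt?_relabel_of_ne _ _ _ _ fun k hk => ?_).symm
      cases k with
      | zero => simp
      | succ k => exact hq (k + 1) (by omega) (by simpa using hk)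

end LTree

theorem stmt1_general (n : ℕ)
    (T : LTree n)
    (p : List ℕ) (hlen : p.length = n)
    (v : ℕ → LTree n) (hv0 : v 0 = T)
    (hchain : ∀ k < n, ((v k).children)[p.getD k 0]? = some (v (k + 1))) :
    ∃ g : MvPolynomial (Fin n × Fin n) ℚ,
      (∑ᶠ T' ∈ {T' : LTree n |
          (∀ q : List ℕ, (T.subtreeAt? q).isSome ↔ (T'.subtreeAt? q).isSome) ∧
          ∀ q : List ℕ, (∀ k : ℕ, 1 ≤ k → k < n → q ≠ p.take k) →
            T.labelAt? q = T'.labelAt? q}, T'.weight) =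
        fernZ T.label
          (List.ofFn fun k : Fin (n - 1) =>
            ((v k.1).children.map LTree.label).eraseIdx (p.getD k.1 0))
          ((v (n - 1)).children.map LTree.label) * g := by
  obtain ⟨m, rfl⟩ : ∃ m, n = m + 1 := Nat.exists_eq_add_one.mpr T.label.pos
  have hpath : ∀ k ≤ m, (T.subtreeAt? (p.take k)).isSome := fun k hk => by
    rw [← hv0, LTree.subtreeAt?_take_of_chain (fun k hk => hchain k (hlen ▸ hk)) k (by omega)]
    rfl
  obtain ⟨g, hg⟩ := LTree.exists_sum_weight_relabel_eq_fernZ_mul m p v (by omega)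
    fun k hk => hchain k (by omega)
  refine ⟨g, ?_⟩
  rw [LTree.setOf_eq_range_relabel (by omega) hpath,
    finsum_mem_range (LTree.relabel_injective (by omega) hpath), finsum_eq_sum_of_fintype,
    ← hv0]
  exact hg _

/-- let `d ≥ 2` and let `T` be a `d`-regular rooted plane tree of height at
least `n` with labeling `λ` (encoded as the labeled tree `T : LTree n`).  Let `p` be the
leftmost `n`-path `LP_n(T)` (the lexicographically least valid position of length `n`),
with vertices `v 0 = root, v 1, …, v n` along it.  Then `z(fern_{d,n}, λ_fern)` divides
`∑_{η ∈ K(T,λ)} w(T,η)`, where `K(T,λ)` is the set of labelings agreeing with `λ` off the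
interior of `LP_n(T)`, and `λ_fern` labels the root of the fern by `λ(root T)` and its
leaves by the `λ`-labels of the children of the vertices of `LP_n(T)`. -/
theorem stmt1 (n d : ℕ) (hn : 1 ≤ n) (hd : 2 ≤ d)
    (T : LTree n) (hreg : T.IsReg d)
    (p : List ℕ) (hlen : p.length = n)
    (v : ℕ → LTree n) (hv0 : v 0 = T)
    (hchain : ∀ k < n, ((v k).children)[p.getD k 0]? = some (v (k + 1)))
    (hleft : ∀ q : List ℕ, q.length = n → (T.subtreeAt? q).isSome →
      p = q ∨ List.Lex (· < ·) p q) :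
    ∃ g : MvPolynomial (Fin n × Fin n) ℚ,
      (∑ᶠ T' ∈ {T' : LTree n |
          (∀ q : List ℕ, (T.subtreeAt? q).isSome ↔ (T'.subtreeAt? q).isSome) ∧
          ∀ q : List ℕ, (∀ k : ℕ, 1 ≤ k → k < n → q ≠ p.take k) →
            T.labelAt? q = T'.labelAt? q}, T'.weight) =
        fernZ T.label
          (List.ofFn fun k : Fin (n - 1) =>
            ((v k.1).children.map LTree.label).eraseIdx (p.getD k.1 0))
          ((v (n - 1)).children.map LTree.label) * g :=
  stmt1_general n T p hlen v hv0 hchain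
end

section
/- Let d ≥ 2 and fix l ∈ [1,n]. For all i, j ∈ [1,n], (B^n)_{i,j} = −Σ_{k=0}^{n−1} (B^k)_{i,j} · d^{−(n−k)} · J_{α(n−k,l)}, an identity in R, where J_{α(n−k,l)} ∈ R is the coefficient of x_l^{(n−k)(d−1)} in Jac(f). -/
open MvPolynomial Matrix

noncomputable section

/-- `R n` is the polynomial ring `ℚ[a_{i,j} : 1 ≤ i,j ≤ n]`. -/
abbrev JacR (n : ℕ) : Type := MvPolynomial (Fin n × Fin n) ℚ

/-- The `i`-th component of the degree `d`-linear map: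
`f_i = x_i - (∑_j a_{i,j} x_j)^d`. -/
def degLinMap (n d : ℕ) (i : Fin n) : MvPolynomial (Fin n) (JacR n) :=
  X i - (∑ j : Fin n, C (X (i, j) : JacR n) * X j) ^ d

/-- The differential `D(f)`, with `(D(f))_{i,j} = ∂f_i/∂x_j`. -/
def diffMat (n d : ℕ) : Matrix (Fin n) (Fin n) (MvPolynomial (Fin n) (JacR n)) :=
  fun i j => pderiv j (degLinMap n d i)

/-- The Jacobian `Jac(f) = det(D(f))`. -/
def jacPoly (n d : ℕ) : MvPolynomial (Fin n) (JacR n) := (diffMat n d).det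

/-- The matrix `B` with entries `B_{i,j} = a_{i,j} · a_{i,l}^{d-1}`. -/
def Bmat (n d : ℕ) (l : Fin n) : Matrix (Fin n) (Fin n) (JacR n) :=
  fun i j => X (i, j) * X (i, l) ^ (d - 1)

/-!
On the `x_l`-axis (`x_l = t`, all other `x_m = 0`) the differential `D(f)` becomes
`1 - d t^(d-1) B`, so `Jac(f)` restricts there to the reversed characteristic polynomial of `B`
evaluated at `d t^(d-1)`. Hence `J_{α(m,l)} = d^m c_{n-m}`, where `c_k` are the coefficients of
the characteristic polynomial of `B`, and the identity is the `(i,j)` entry of Cayley–Hamilton.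
-/

lemma MvPolynomial.coeff_aeval_piSingle_X {σ R : Type*} [DecidableEq σ] [CommSemiring R]
    (l : σ) (p : MvPolynomial σ R) (e : ℕ) :
    (aeval (Pi.single l Polynomial.X) p).coeff e = coeff (Finsupp.single l e) p := by
  induction p using MvPolynomial.induction_on' with
  | add p q hp hq => simp [hp, hq]
  | monomial s a =>
    rw [aeval_monomial, coeff_monomial, Polynomial.algebraMap_eq, Polynomial.coeff_C_mul]
    by_cases hs : s = Finsupp.single l (s l)
    · rw [hs, Finsupp.prod_single_index (by simp), Pi.single_eq_same, Polynomial.coeff_X_pow]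
      simp [(Finsupp.single_injective l).eq_iff, eq_comm]
    · obtain ⟨i, hi⟩ := DFunLike.ne_iff.mp hs
      have hil : i ≠ l := by rintro rfl; simp at hi
      have hsi : s i ≠ 0 := by simpa [Finsupp.single_eq_of_ne hil] using hi
      rw [Finsupp.prod, Finset.prod_eq_zero (Finsupp.mem_support_iff.mpr hsi) (by simp [hil, hsi]),
        if_neg]
      · simp
      · rintro rfl; simp [Finsupp.single_eq_of_ne hil] at hsi

lemma Matrix.coeff_charpolyRev {n R : Type*} [Fintype n] [DecidableEq n] [CommRing R]
    [Nontrivial R] (M : Matrix n n R) {m : ℕ} (hm : m ≤ Fintype.card n) :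
    M.charpolyRev.coeff m = M.charpoly.coeff (Fintype.card n - m) := by
  rw [← reverse_charpoly, Polynomial.coeff_reverse, charpoly_natDegree_eq_dim,
    Polynomial.revAt_le hm]

lemma Matrix.pow_card_apply_eq_neg_sum {n R : Type*} [Fintype n] [DecidableEq n] [CommRing R]
    [Nontrivial R] (M : Matrix n n R) (i j : n) :
    (M ^ Fintype.card n) i j =
      -∑ k ∈ Finset.range (Fintype.card n), M.charpoly.coeff k * (M ^ k) i j := by
  have h := congrArg (Polynomial.aeval M) M.charpoly_monic.as_sum
  rw [aeval_self_charpoly, charpoly_natDegree_eq_dim] at h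
  rw [eq_neg_iff_add_eq_zero, ← Matrix.zero_apply (α := R) i j, h]
  simp [Matrix.sum_apply, Algebra.algebraMap_eq_smul_one]

lemma Polynomial.coeff_comp_C_mul_X_pow_mul {R : Type*} [CommSemiring R] (p : Polynomial R)
    (a : R) {r : ℕ} (hr : 0 < r) (m : ℕ) :
    (p.comp (C a * X ^ r)).coeff (m * r) = p.coeff m * a ^ m := by
  have : p.comp (C a * X ^ r) = expand R r (p.comp (C a * X)) := by
    rw [expand_eq_comp_X_pow, comp_assoc, mul_comp, C_comp, X_comp]
  rw [this, coeff_expand_mul hr, comp_C_mul_X_coeff]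

lemma diffMat_apply (n d : ℕ) (i j : Fin n) :
    diffMat n d i j = (if i = j then 1 else 0) - (d : MvPolynomial (Fin n) (JacR n)) *
      (∑ m : Fin n, C (X (i, m) : JacR n) * X m) ^ (d - 1) * C (X (i, j) : JacR n) := by
  simp [diffMat, degLinMap, MvPolynomial.pderiv_X, Pi.single_apply, mul_assoc]

lemma aeval_piSingle_X_diffMat (n d : ℕ) (l : Fin n) :
    (diffMat n d).map (aeval (Pi.single l Polynomial.X)) =
      ((1 : Matrix (Fin n) (Fin n) (Polynomial (JacR n))) -
          (Polynomial.X : Polynomial (JacR n)) • (Bmat n d l).map Polynomial.C).map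
        (Polynomial.compRingHom (Polynomial.C (d : JacR n) * Polynomial.X ^ (d - 1))) := by
  ext i j : 1
  simp only [Matrix.map_apply, diffMat_apply, Bmat, Matrix.one_apply, Matrix.sub_apply,
    Matrix.smul_apply, smul_eq_mul]
  split_ifs <;> simp [Pi.single_apply] <;> ring

lemma aeval_piSingle_X_jacPoly (n d : ℕ) (l : Fin n) :
    aeval (Pi.single l Polynomial.X) (jacPoly n d) =
      (Bmat n d l).charpolyRev.comp (Polynomial.C (d : JacR n) * Polynomial.X ^ (d - 1)) := by
  rw [jacPoly, AlgHom.map_det, AlgHom.mapMatrix_apply, aeval_piSingle_X_diffMat,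
    ← RingHom.mapMatrix_apply, ← RingHom.map_det]
  rfl

lemma coeff_jacPoly (n d : ℕ) (hd : 2 ≤ d) (l : Fin n) {m : ℕ} (hm : m ≤ n) :
    coeff (Finsupp.single l (m * (d - 1))) (jacPoly n d) =
      (Bmat n d l).charpoly.coeff (n - m) * (d : JacR n) ^ m := by
  rw [← coeff_aeval_piSingle_X, aeval_piSingle_X_jacPoly,
    Polynomial.coeff_comp_C_mul_X_pow_mul _ _ (by omega),
    coeff_charpolyRev _ (by simpa using hm), Fintype.card_fin]

theorem stmt5_general (n d : ℕ) (hd : 2 ≤ d) (l : Fin n) (i j : Fin n) :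
    (Bmat n d l ^ n) i j =
      -∑ k ∈ Finset.range n,
        ((d : ℚ) ^ (n - k))⁻¹ •
          ((Bmat n d l ^ k) i j *
            coeff (Finsupp.single l ((n - k) * (d - 1))) (jacPoly n d)) := by
  have h := (Bmat n d l).pow_card_apply_eq_neg_sum i j
  rw [Fintype.card_fin] at h
  rw [h, neg_inj]
  refine Finset.sum_congr rfl fun k hk => ?_
  have hdpow : (d : JacR n) ^ (n - k) = algebraMap ℚ (JacR n) ((d : ℚ) ^ (n - k)) := by simp
  rw [coeff_jacPoly n d hd l (Nat.sub_le n k), Nat.sub_sub_self (Finset.mem_range.mp hk).le,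
    hdpow, ← Algebra.commutes, ← Algebra.smul_def, mul_smul_comm, smul_smul,
    inv_mul_cancel₀ (by positivity), one_smul, mul_comm]

/-- `(B^n)_{i,j} = -∑_{k=0}^{n-1} (B^k)_{i,j} · d^{-(n-k)} · J_{α(n-k,l)}`,
where `J_{α(n-k,l)}` is the coefficient of `x_l^{(n-k)(d-1)}` in `Jac(f)`. -/
theorem stmt5 (n d : ℕ) (hn : 1 ≤ n) (hd : 2 ≤ d) (l : Fin n) (i j : Fin n) :
    (Bmat n d l ^ n) i j =
      -∑ k ∈ Finset.range n,
        ((d : ℚ) ^ (n - k))⁻¹ •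
          ((Bmat n d l ^ k) i j *
            coeff (Finsupp.single l ((n - k) * (d - 1))) (jacPoly n d)) :=
  stmt5_general n d hd l i j
end
end
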